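/- arXiv:2201.12663 — 2 statements merged into one kernel-verified Lean document; each statement's English description precedes it below -/
import Mathlib

section
/- Under the hypotheses of the RHOSVD error bound (A = Σ_{ν=1}^{R} ξ_ν u_ν^{(1)} ⊗ ⋯ ⊗ u_ν^{(d)} with ‖u_ν^{(ℓ)}‖ = 1, singular value decompositions U^{(ℓ)} = Σ_k σ_{ℓ,k} z_k^{(ℓ)} (v_k^{(ℓ)})^T of the side matrices, and RHOSVD approximation A⁰ obtained by rank-r_ℓ truncation of each U^{(ℓ)}), assume in addition that the vectors u_1^{(1)},…,u_R^{(1)} are pairwise orthogonal (so that U^{(1)} has orthonormal columns). Then ‖A‖² = Σ_{ν=1}^{R} ξ_ν² in the Frobenius norm, and consequently ‖A − A⁰‖ ≤ ‖A‖ · Σ_{ℓ=1}^{d} ( Σ_{k=r_ℓ+1}^{min(n,R)} σ_{ℓ,k}² )^{1/2}. -/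
open Finset

private lemma sum_pi_prod {d n : ℕ} (f : Fin d → Fin n → ℝ) :
    ∑ i : Fin d → Fin n, ∏ m, f m (i m) = ∏ m, ∑ j, f m j := by
  rw [Finset.prod_univ_sum, Fintype.piFinset_univ]

private lemma inner_cp {d n R : ℕ} (c c' : Fin R → ℝ) (f g : Fin d → Fin R → Fin n → ℝ) :
    ∑ i : Fin d → Fin n,
        (∑ ν, c ν * ∏ ℓ, f ℓ ν (i ℓ)) * (∑ μ, c' μ * ∏ ℓ, g ℓ μ (i ℓ))
      = ∑ ν, ∑ μ, c ν * c' μ * ∏ ℓ, (∑ j, f ℓ ν j * g ℓ μ j) := by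
  have h1 : ∀ i : Fin d → Fin n,
      (∑ ν, c ν * ∏ ℓ, f ℓ ν (i ℓ)) * (∑ μ, c' μ * ∏ ℓ, g ℓ μ (i ℓ))
      = ∑ ν, ∑ μ, c ν * c' μ * ∏ ℓ, (f ℓ ν (i ℓ) * g ℓ μ (i ℓ)) := by
    intro i
    rw [Finset.sum_mul_sum]
    refine Finset.sum_congr rfl fun ν _ => Finset.sum_congr rfl fun μ _ => ?_
    rw [Finset.prod_mul_distrib]; ring
  simp_rw [h1]
  rw [Finset.sum_comm]
  refine Finset.sum_congr rfl fun ν _ => ?_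
  rw [Finset.sum_comm]
  refine Finset.sum_congr rfl fun μ _ => ?_
  rw [← Finset.mul_sum, sum_pi_prod (fun ℓ j => f ℓ ν j * g ℓ μ j)]

private lemma sum_sq_exp {n m : ℕ} (z : Fin m → Fin n → ℝ)
    (hz : ∀ k k', ∑ i, z k i * z k' i = if k = k' then (1:ℝ) else 0)
    (a : Fin m → ℝ) :
    ∑ i, (∑ k, a k * z k i) ^ 2 = ∑ k, a k ^ 2 := by
  have h1 : ∀ i, (∑ k, a k * z k i) ^ 2
      = ∑ k, ∑ k', (a k * a k') * (z k i * z k' i) := by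
    intro i
    rw [sq, Finset.sum_mul_sum]
    exact Finset.sum_congr rfl fun k _ => Finset.sum_congr rfl fun k' _ => by ring
  simp_rw [h1]
  rw [Finset.sum_comm]
  refine Finset.sum_congr rfl fun k _ => ?_
  rw [Finset.sum_comm]
  have h2 : ∀ k', ∑ i, (a k * a k') * (z k i * z k' i)
      = (a k * a k') * (if k = k' then (1:ℝ) else 0) := by
    intro k'; rw [← Finset.mul_sum, hz]
  simp only [h2, mul_ite, mul_one, mul_zero]
  rw [Finset.sum_ite_eq univ k (fun k' => a k * a k')]
  simp [sq]

private lemma sqrt_sum_sq_eq_norm {ι : Type*} [Fintype ι] (F : ι → ℝ) :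
    Real.sqrt (∑ i, F i ^ 2) = ‖(WithLp.linearEquiv 2 ℝ (ι → ℝ)).symm F‖ := by
  rw [EuclideanSpace.norm_eq]
  congr 1
  exact Finset.sum_congr rfl fun i _ => by rw [Real.norm_eq_abs, sq_abs]; rfl

private lemma sqrt_triangle {ι κ : Type*} [Fintype ι] [Fintype κ] (F : κ → ι → ℝ) :
    Real.sqrt (∑ i, (∑ ℓ, F ℓ i) ^ 2) ≤ ∑ ℓ, Real.sqrt (∑ i, F ℓ i ^ 2) := by
  have hfun : (fun i => ∑ ℓ, F ℓ i) = ∑ ℓ, F ℓ := by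
    ext i; simp
  have h : (WithLp.linearEquiv 2 ℝ (ι → ℝ)).symm (fun i => ∑ ℓ, F ℓ i)
      = ∑ ℓ, (WithLp.linearEquiv 2 ℝ (ι → ℝ)).symm (F ℓ) := by
    rw [hfun, map_sum]
  calc Real.sqrt (∑ i, (∑ ℓ, F ℓ i) ^ 2)
      = ‖(WithLp.linearEquiv 2 ℝ (ι → ℝ)).symm (fun i => ∑ ℓ, F ℓ i)‖ :=
        sqrt_sum_sq_eq_norm _
    _ = ‖∑ ℓ, (WithLp.linearEquiv 2 ℝ (ι → ℝ)).symm (F ℓ)‖ := by rw [h]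
    _ ≤ ∑ ℓ, ‖(WithLp.linearEquiv 2 ℝ (ι → ℝ)).symm (F ℓ)‖ := norm_sum_le _ _
    _ = ∑ ℓ, Real.sqrt (∑ i, F ℓ i ^ 2) :=
        Finset.sum_congr rfl fun ℓ _ => (sqrt_sum_sq_eq_norm _).symm

/-- **Stability of RHOSVD, part (A)** (Corollary 2.2 (A), Khoromskaia–Khoromskij).
If in addition the first-mode skeleton vectors `u ν^{(1)}` are pairwise orthogonal
(so that `U^{(1)}` has orthonormal columns), then `‖A‖² = Σ_ν ξ_ν²` and consequently
`‖A − A⁰‖ ≤ ‖A‖ · Σ_ℓ (Σ_{k > r_ℓ} σ_{ℓ,k}²)^{1/2}`. -/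
theorem rhosvd_stability_orthogonal
    (d n R : ℕ) (hd : 0 < d) (hn : 1 ≤ n) (hR : 1 ≤ R)
    (ξ : Fin R → ℝ)
    (u : Fin d → Fin R → Fin n → ℝ)
    (hu_norm : ∀ ℓ ν, ∑ i, (u ℓ ν i) ^ 2 = 1)
    (hu_orth : ∀ ν μ : Fin R, ν ≠ μ → ∑ i, u ⟨0, hd⟩ ν i * u ⟨0, hd⟩ μ i = 0)
    (σ : Fin d → Fin (min n R) → ℝ)
    (z : Fin d → Fin (min n R) → Fin n → ℝ)
    (v : Fin d → Fin (min n R) → Fin R → ℝ)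
    (hσ : ∀ ℓ k, 0 ≤ σ ℓ k)
    (hz : ∀ ℓ k k', ∑ i, z ℓ k i * z ℓ k' i = if k = k' then (1:ℝ) else 0)
    (hv : ∀ ℓ k k', ∑ ν, v ℓ k ν * v ℓ k' ν = if k = k' then (1:ℝ) else 0)
    (hSVD : ∀ ℓ ν i, u ℓ ν i = ∑ k, σ ℓ k * z ℓ k i * v ℓ k ν)
    (r : Fin d → ℕ) (hr : ∀ ℓ, r ℓ ≤ min n R)
    (w : Fin d → Fin R → Fin n → ℝ)
    (hw : ∀ ℓ ν i, w ℓ ν i = ∑ k : Fin (min n R), if (k : ℕ) < r ℓ then σ ℓ k * z ℓ k i * v ℓ k ν else 0)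
    (A A0 : (Fin d → Fin n) → ℝ)
    (hA : ∀ i, A i = ∑ ν, ξ ν * ∏ ℓ, u ℓ ν (i ℓ))
    (hA0 : ∀ i, A0 i = ∑ ν, ξ ν * ∏ ℓ, w ℓ ν (i ℓ)) :
    (∑ i, (A i) ^ 2 = ∑ ν, (ξ ν) ^ 2) ∧
    Real.sqrt (∑ i, (A i - A0 i) ^ 2) ≤
      Real.sqrt (∑ i, (A i) ^ 2) *
        ∑ ℓ, Real.sqrt (∑ k : Fin (min n R), if r ℓ ≤ (k : ℕ) then (σ ℓ k) ^ 2 else 0) := by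
  classical
  set m0 : Fin d := ⟨0, hd⟩ with hm0
  have uu : ∀ ℓ ν, ∑ i, u ℓ ν i * u ℓ ν i = 1 := by
    intro ℓ ν; simpa [sq] using hu_norm ℓ ν
  -- Part 1
  have part1 : ∑ i, A i ^ 2 = ∑ ν, ξ ν ^ 2 := by
    have hexp : ∑ i, A i ^ 2
        = ∑ ν, ∑ μ, ξ ν * ξ μ * ∏ ℓ, (∑ j, u ℓ ν j * u ℓ μ j) := by
      simp_rw [hA, sq]
      exact inner_cp ξ ξ u u
    rw [hexp]
    refine Finset.sum_congr rfl fun ν _ => ?_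
    rw [Finset.sum_eq_single ν]
    · simp [uu, sq]
    · intro μ _ hμ
      rw [Finset.prod_eq_zero (Finset.mem_univ m0) (hu_orth ν μ (Ne.symm hμ)), mul_zero]
    · intro h; exact absurd (Finset.mem_univ ν) h
  -- singular value expansions
  have expand : ∀ (ℓ : Fin d) (a : Fin (min n R) → ℝ),
      ∑ i, (∑ k : Fin (min n R), a k * z ℓ k i) ^ 2 = ∑ k : Fin (min n R), a k ^ 2 :=
    fun ℓ a => sum_sq_exp (z ℓ) (hz ℓ) a
  have hu_exp : ∀ ℓ ν, ∑ k : Fin (min n R), (σ ℓ k * v ℓ k ν) ^ 2 = 1 := by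
    intro ℓ ν
    rw [← expand ℓ (fun k => σ ℓ k * v ℓ k ν), ← hu_norm ℓ ν]
    refine Finset.sum_congr rfl fun i _ => ?_
    congr 1
    rw [hSVD ℓ ν i]
    exact Finset.sum_congr rfl fun k _ => by ring
  have hw_le : ∀ ℓ ν, ∑ i, (w ℓ ν i) ^ 2 ≤ 1 := by
    intro ℓ ν
    have hweq : ∑ i, (w ℓ ν i) ^ 2
        = ∑ k : Fin (min n R), (if (k : ℕ) < r ℓ then σ ℓ k * v ℓ k ν else 0) ^ 2 := by
      rw [← expand ℓ (fun k => if (k : ℕ) < r ℓ then σ ℓ k * v ℓ k ν else 0)]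
      refine Finset.sum_congr rfl fun i _ => ?_
      congr 1
      rw [hw ℓ ν i]
      refine Finset.sum_congr rfl fun k _ => ?_
      split_ifs with h
      · ring
      · simp
    rw [hweq]
    calc ∑ k : Fin (min n R), (if (k : ℕ) < r ℓ then σ ℓ k * v ℓ k ν else 0) ^ 2
        ≤ ∑ k : Fin (min n R), (σ ℓ k * v ℓ k ν) ^ 2 := by
          refine Finset.sum_le_sum fun k _ => ?_
          split_ifs with h
          · exact le_rfl
          · simpa using sq_nonneg (σ ℓ k * v ℓ k ν)
      _ = 1 := hu_exp ℓ ν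
  have huw : ∀ ℓ ν, ∑ i, (u ℓ ν i - w ℓ ν i) ^ 2
      = ∑ k : Fin (min n R), (if r ℓ ≤ (k : ℕ) then σ ℓ k ^ 2 * v ℓ k ν ^ 2 else 0) := by
    intro ℓ ν
    have hdiff : ∀ i, u ℓ ν i - w ℓ ν i
        = ∑ k : Fin (min n R), (if r ℓ ≤ (k : ℕ) then σ ℓ k * v ℓ k ν else 0) * z ℓ k i := by
      intro i
      rw [hSVD ℓ ν i, hw ℓ ν i, ← Finset.sum_sub_distrib]
      refine Finset.sum_congr rfl fun k _ => ?_
      rcases lt_or_ge (k : ℕ) (r ℓ) with h | h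
      · rw [if_pos h, if_neg (not_le.mpr h), zero_mul, sub_self]
      · rw [if_neg (not_lt.mpr h), if_pos h, sub_zero]; ring
    simp_rw [hdiff]
    rw [expand ℓ (fun k => if r ℓ ≤ (k : ℕ) then σ ℓ k * v ℓ k ν else 0)]
    refine Finset.sum_congr rfl fun k _ => ?_
    split_ifs with h
    · ring
    · simp
  have htail : ∀ ℓ, ∑ ν, ∑ k : Fin (min n R), (if r ℓ ≤ (k : ℕ) then σ ℓ k ^ 2 * v ℓ k ν ^ 2 else 0)
      = ∑ k : Fin (min n R), (if r ℓ ≤ (k : ℕ) then σ ℓ k ^ 2 else 0) := by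
    intro ℓ
    rw [Finset.sum_comm]
    refine Finset.sum_congr rfl fun k _ => ?_
    rcases le_or_gt (r ℓ) (k : ℕ) with h | h
    · simp only [if_pos h]
      have hvv := hv ℓ k k
      rw [if_pos rfl] at hvv
      calc ∑ ν, σ ℓ k ^ 2 * v ℓ k ν ^ 2
          = σ ℓ k ^ 2 * ∑ ν, v ℓ k ν * v ℓ k ν := by
            rw [Finset.mul_sum]
            exact Finset.sum_congr rfl fun ν _ => by ring
        _ = σ ℓ k ^ 2 := by rw [hvv, mul_one]
    · simp [not_le.mpr h]
  -- hybrid tensors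
  set g : Fin d → Fin d → Fin R → Fin n → ℝ :=
    fun ℓ m ν j => if m = ℓ then u m ν j - w m ν j
      else if (m : ℕ) < (ℓ : ℕ) then w m ν j else u m ν j with hg
  set D : Fin d → (Fin d → Fin n) → ℝ :=
    fun ℓ i => ∑ ν, ξ ν * ∏ m, g ℓ m ν (i m) with hD
  have hdecomp : ∀ i, A i - A0 i = ∑ ℓ, D ℓ i := by
    intro i
    have swap : ∑ ℓ, D ℓ i = ∑ ν, ξ ν * ∑ ℓ : Fin d, ∏ m, g ℓ m ν (i m) := by
      simp only [hD]
      rw [Finset.sum_comm]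
      exact Finset.sum_congr rfl fun ν _ => by rw [Finset.mul_sum]
    rw [hA, hA0, ← Finset.sum_sub_distrib, swap]
    refine Finset.sum_congr rfl fun ν _ => ?_
    rw [← mul_sub]
    congr 1
    set P : ℕ → ℝ := fun s => ∏ m : Fin d, if (m : ℕ) < s then w m ν (i m) else u m ν (i m)
      with hP
    have hP0 : P 0 = ∏ m, u m ν (i m) := by simp [hP]
    have hPd : P d = ∏ m, w m ν (i m) := by
      simp only [hP]
      exact Finset.prod_congr rfl fun m _ => if_pos m.isLt
    have hstep : ∀ ℓ : Fin d, P ℓ - P ((ℓ : ℕ) + 1) = ∏ m, g ℓ m ν (i m) := by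
      intro ℓ
      have e1 : P ℓ = u ℓ ν (i ℓ) *
          ∏ m ∈ univ.erase ℓ, (if (m : ℕ) < (ℓ : ℕ) then w m ν (i m) else u m ν (i m)) := by
        simp only [hP]
        rw [← Finset.mul_prod_erase univ _ (Finset.mem_univ ℓ), if_neg (lt_irrefl _)]
      have e2 : P ((ℓ : ℕ) + 1) = w ℓ ν (i ℓ) *
          ∏ m ∈ univ.erase ℓ, (if (m : ℕ) < (ℓ : ℕ) then w m ν (i m) else u m ν (i m)) := by
        simp only [hP]
        rw [← Finset.mul_prod_erase univ
          (fun m : Fin d => if (m : ℕ) < (ℓ : ℕ) + 1 then w m ν (i m) else u m ν (i m))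
          (Finset.mem_univ ℓ)]
        congr 1
        · exact if_pos (Nat.lt_succ_self _)
        · refine Finset.prod_congr rfl fun m hm => ?_
          have hne : (m : ℕ) ≠ (ℓ : ℕ) :=
            fun h => (Finset.mem_erase.mp hm).1 (Fin.ext h)
          by_cases h : (m : ℕ) < (ℓ : ℕ)
          · rw [if_pos (Nat.lt_succ_of_lt h), if_pos h]
          · rw [if_neg (by omega), if_neg h]
      have e3 : ∏ m, g ℓ m ν (i m) = (u ℓ ν (i ℓ) - w ℓ ν (i ℓ)) *
          ∏ m ∈ univ.erase ℓ, (if (m : ℕ) < (ℓ : ℕ) then w m ν (i m) else u m ν (i m)) := by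
        rw [← Finset.mul_prod_erase univ _ (Finset.mem_univ ℓ)]
        congr 1
        · simp [hg]
        · refine Finset.prod_congr rfl fun m hm => ?_
          have hne : m ≠ ℓ := (Finset.mem_erase.mp hm).1
          simp [hg, hne]
      rw [e1, e2, e3]; ring
    calc ∏ m, u m ν (i m) - ∏ m, w m ν (i m) = P 0 - P d := by rw [hP0, hPd]
      _ = ∑ s ∈ Finset.range d, (P s - P (s + 1)) := (Finset.sum_range_sub' P d).symm
      _ = ∑ ℓ : Fin d, (P ℓ - P ((ℓ : ℕ) + 1)) :=
          (Fin.sum_univ_eq_sum_range (fun s => P s - P (s + 1)) d).symm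
      _ = ∑ ℓ, ∏ m, g ℓ m ν (i m) := Finset.sum_congr rfl fun ℓ _ => hstep ℓ
  -- bound each D ℓ
  have he0 : ∀ ℓ ν, (0:ℝ) ≤ ∑ k : Fin (min n R), (if r ℓ ≤ (k : ℕ) then σ ℓ k ^ 2 * v ℓ k ν ^ 2 else 0) := by
    intro ℓ ν
    refine Finset.sum_nonneg fun k _ => ?_
    split_ifs
    · positivity
    · exact le_rfl
  have hDle : ∀ ℓ, Real.sqrt (∑ i, (D ℓ i) ^ 2)
      ≤ Real.sqrt (∑ ν, ξ ν ^ 2) *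
        Real.sqrt (∑ k : Fin (min n R), if r ℓ ≤ (k : ℕ) then σ ℓ k ^ 2 else 0) := by
    intro ℓ
    have t1 : Real.sqrt (∑ i, (D ℓ i) ^ 2)
        ≤ ∑ ν, Real.sqrt (∑ i : Fin d → Fin n, (ξ ν * ∏ m, g ℓ m ν (i m)) ^ 2) := by
      simpa [hD] using
        sqrt_triangle (fun ν (i : Fin d → Fin n) => ξ ν * ∏ m, g ℓ m ν (i m))
    have t2 : ∀ ν, ∑ i : Fin d → Fin n, (ξ ν * ∏ m, g ℓ m ν (i m)) ^ 2
        = ξ ν ^ 2 * ∏ m, ∑ j, (g ℓ m ν j) ^ 2 := by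
      intro ν
      rw [← sum_pi_prod (fun m j => (g ℓ m ν j) ^ 2), Finset.mul_sum]
      refine Finset.sum_congr rfl fun i _ => ?_
      rw [mul_pow, ← Finset.prod_pow]
    have t3 : ∀ ν, Real.sqrt (ξ ν ^ 2 * ∏ m, ∑ j, (g ℓ m ν j) ^ 2)
        ≤ |ξ ν| * Real.sqrt (∑ k : Fin (min n R), if r ℓ ≤ (k : ℕ) then σ ℓ k ^ 2 * v ℓ k ν ^ 2 else 0) := by
      intro ν
      rw [Real.sqrt_mul (sq_nonneg _), Real.sqrt_sq_eq_abs]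
      refine mul_le_mul_of_nonneg_left ?_ (abs_nonneg _)
      refine Real.sqrt_le_sqrt ?_
      have hgl : ∑ j, (g ℓ ℓ ν j) ^ 2
          = ∑ k : Fin (min n R), (if r ℓ ≤ (k : ℕ) then σ ℓ k ^ 2 * v ℓ k ν ^ 2 else 0) := by
        have : ∀ j, g ℓ ℓ ν j = u ℓ ν j - w ℓ ν j := by intro j; simp [hg]
        simp_rw [this]
        exact huw ℓ ν
      calc ∏ m, ∑ j, (g ℓ m ν j) ^ 2
          = (∑ j, (g ℓ ℓ ν j) ^ 2) * ∏ m ∈ univ.erase ℓ, ∑ j, (g ℓ m ν j) ^ 2 :=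
            (Finset.mul_prod_erase univ _ (Finset.mem_univ ℓ)).symm
        _ ≤ (∑ j, (g ℓ ℓ ν j) ^ 2) * 1 := by
            refine mul_le_mul_of_nonneg_left ?_ (Finset.sum_nonneg fun j _ => sq_nonneg _)
            refine Finset.prod_le_one (fun m _ => Finset.sum_nonneg fun j _ => sq_nonneg _) ?_
            intro m hm
            have hne : m ≠ ℓ := (Finset.mem_erase.mp hm).1
            have : ∀ j, g ℓ m ν j
                = if (m : ℕ) < (ℓ : ℕ) then w m ν j else u m ν j := by
              intro j; simp [hg, hne]
            simp_rw [this]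
            by_cases h : (m : ℕ) < (ℓ : ℕ)
            · simp only [if_pos h]; exact hw_le m ν
            · simp only [if_neg h]; exact le_of_eq (hu_norm m ν)
        _ = ∑ k : Fin (min n R), (if r ℓ ≤ (k : ℕ) then σ ℓ k ^ 2 * v ℓ k ν ^ 2 else 0) := by
            rw [mul_one, hgl]
    have t4 : ∑ ν, |ξ ν| *
          Real.sqrt (∑ k : Fin (min n R), if r ℓ ≤ (k : ℕ) then σ ℓ k ^ 2 * v ℓ k ν ^ 2 else 0)
        ≤ Real.sqrt (∑ ν, ξ ν ^ 2) *
          Real.sqrt (∑ ν, ∑ k : Fin (min n R), if r ℓ ≤ (k : ℕ) then σ ℓ k ^ 2 * v ℓ k ν ^ 2 else 0) := by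
      have hcs := Real.sum_mul_le_sqrt_mul_sqrt Finset.univ (fun ν => |ξ ν|)
        (fun ν => Real.sqrt (∑ k : Fin (min n R), if r ℓ ≤ (k : ℕ) then σ ℓ k ^ 2 * v ℓ k ν ^ 2 else 0))
      have h1 : ∑ ν, |ξ ν| ^ 2 = ∑ ν, ξ ν ^ 2 :=
        Finset.sum_congr rfl fun ν _ => sq_abs _
      have h2 : ∑ ν, (Real.sqrt (∑ k : Fin (min n R), if r ℓ ≤ (k : ℕ) then σ ℓ k ^ 2 * v ℓ k ν ^ 2 else 0)) ^ 2
          = ∑ ν, ∑ k : Fin (min n R), (if r ℓ ≤ (k : ℕ) then σ ℓ k ^ 2 * v ℓ k ν ^ 2 else 0) :=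
        Finset.sum_congr rfl fun ν _ => Real.sq_sqrt (he0 ℓ ν)
      rw [h1, h2] at hcs
      exact hcs
    calc Real.sqrt (∑ i, (D ℓ i) ^ 2)
        ≤ ∑ ν, Real.sqrt (∑ i : Fin d → Fin n, (ξ ν * ∏ m, g ℓ m ν (i m)) ^ 2) := t1
      _ = ∑ ν, Real.sqrt (ξ ν ^ 2 * ∏ m, ∑ j, (g ℓ m ν j) ^ 2) :=
          Finset.sum_congr rfl fun ν _ => by rw [t2 ν]
      _ ≤ ∑ ν, |ξ ν| *
            Real.sqrt (∑ k : Fin (min n R), if r ℓ ≤ (k : ℕ) then σ ℓ k ^ 2 * v ℓ k ν ^ 2 else 0) :=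
          Finset.sum_le_sum fun ν _ => t3 ν
      _ ≤ Real.sqrt (∑ ν, ξ ν ^ 2) *
            Real.sqrt (∑ ν, ∑ k : Fin (min n R), if r ℓ ≤ (k : ℕ) then σ ℓ k ^ 2 * v ℓ k ν ^ 2 else 0) := t4
      _ = Real.sqrt (∑ ν, ξ ν ^ 2) *
            Real.sqrt (∑ k : Fin (min n R), if r ℓ ≤ (k : ℕ) then σ ℓ k ^ 2 else 0) := by rw [htail ℓ]
  refine ⟨part1, ?_⟩
  calc Real.sqrt (∑ i, (A i - A0 i) ^ 2)
      = Real.sqrt (∑ i, (∑ ℓ, D ℓ i) ^ 2) := by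
        congr 1
        exact Finset.sum_congr rfl fun i _ => by rw [hdecomp i]
    _ ≤ ∑ ℓ, Real.sqrt (∑ i, (D ℓ i) ^ 2) := sqrt_triangle D
    _ ≤ ∑ ℓ, Real.sqrt (∑ ν, ξ ν ^ 2) *
          Real.sqrt (∑ k : Fin (min n R), if r ℓ ≤ (k : ℕ) then σ ℓ k ^ 2 else 0) :=
        Finset.sum_le_sum fun ℓ _ => hDle ℓ
    _ = Real.sqrt (∑ ν, ξ ν ^ 2) *
          ∑ ℓ, Real.sqrt (∑ k : Fin (min n R), if r ℓ ≤ (k : ℕ) then σ ℓ k ^ 2 else 0) := by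
        rw [Finset.mul_sum]
    _ = Real.sqrt (∑ i, A i ^ 2) *
          ∑ ℓ, Real.sqrt (∑ k : Fin (min n R), if r ℓ ≤ (k : ℕ) then (σ ℓ k) ^ 2 else 0) := by
        rw [part1]
end

section
/- Let A = β ×₁ V^{(1)} ×₂ ⋯ ×_d V^{(d)} be an order-d tensor of size n₁×⋯×n_d in Tucker format, with core β ∈ ℝ^{r₁×⋯×r_d} and side matrices V^{(ℓ)} ∈ ℝ^{n_ℓ×r_ℓ} having orthonormal columns. Then for every R ≥ 1, the infimum of ‖A − Z‖ over all order-d tensors Z of size n₁×⋯×n_d admitting a rank-R canonical representation equals the infimum of ‖β − μ‖ over all tensors μ ∈ ℝ^{r₁×⋯×r_d} admitting a rank-R canonical representation (Frobenius norms). -/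
open Finset

/-- A tensor admits a rank-`R` canonical representation if it is a sum of `R`
weighted elementary (rank-one) tensors. -/
def HasCanRank {d : ℕ} {n : Fin d → ℕ} (R : ℕ) (Z : (∀ ℓ, Fin (n ℓ)) → ℝ) : Prop :=
  ∃ (lam : Fin R → ℝ) (y : ∀ ℓ : Fin d, Fin R → Fin (n ℓ) → ℝ),
    ∀ i, Z i = ∑ ν, lam ν * ∏ ℓ, y ℓ ν (i ℓ)

/-- The Frobenius norm of a tensor. -/
noncomputable def frob {d : ℕ} {n : Fin d → ℕ} (A : (∀ ℓ, Fin (n ℓ)) → ℝ) : ℝ :=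
  Real.sqrt (∑ i, (A i) ^ 2)

section Aux
variable {d : ℕ} {n r : Fin d → ℕ} (V : ∀ ℓ, Fin (n ℓ) → Fin (r ℓ) → ℝ)

/-- The Tucker expansion map from core tensors to big tensors. -/
def Tmap (μ : (∀ ℓ, Fin (r ℓ)) → ℝ) : (∀ ℓ, Fin (n ℓ)) → ℝ :=
  fun i => ∑ k : (∀ ℓ, Fin (r ℓ)), μ k * ∏ ℓ, V ℓ (i ℓ) (k ℓ)

/-- The adjoint/projection map from big tensors to core tensors. -/
def Pmap (Z : (∀ ℓ, Fin (n ℓ)) → ℝ) : (∀ ℓ, Fin (r ℓ)) → ℝ :=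
  fun k => ∑ i : (∀ ℓ, Fin (n ℓ)), Z i * ∏ ℓ, V ℓ (i ℓ) (k ℓ)

lemma sum_prod_eq (f : ∀ ℓ : Fin d, Fin (n ℓ) → ℝ) :
    ∑ i : (∀ ℓ, Fin (n ℓ)), ∏ ℓ, f ℓ (i ℓ) = ∏ ℓ, ∑ j, f ℓ j :=
  (Fintype.prod_sum f).symm

variable (hV : ∀ ℓ k k', ∑ i, V ℓ i k * V ℓ i k' = if k = k' then (1:ℝ) else 0)

include hV in
lemma Pmap_Tmap (μ : (∀ ℓ, Fin (r ℓ)) → ℝ) : Pmap V (Tmap V μ) = μ := by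
  funext k
  unfold Pmap Tmap
  simp only [sum_mul, Finset.mul_sum]
  rw [Finset.sum_comm]
  have : ∀ k' : (∀ ℓ, Fin (r ℓ)),
      (∑ i : (∀ ℓ, Fin (n ℓ)), μ k' * (∏ ℓ, V ℓ (i ℓ) (k' ℓ)) * ∏ ℓ, V ℓ (i ℓ) (k ℓ))
      = μ k' * if k' = k then 1 else 0 := by
    intro k'
    have : ∀ i : (∀ ℓ, Fin (n ℓ)),
        μ k' * (∏ ℓ, V ℓ (i ℓ) (k' ℓ)) * ∏ ℓ, V ℓ (i ℓ) (k ℓ)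
        = μ k' * ∏ ℓ, (V ℓ (i ℓ) (k' ℓ) * V ℓ (i ℓ) (k ℓ)) := by
      intro i; rw [mul_assoc, ← Finset.prod_mul_distrib]
    simp_rw [this, ← Finset.mul_sum, sum_prod_eq (fun ℓ j => V ℓ j (k' ℓ) * V ℓ j (k ℓ))]
    congr 1
    simp_rw [hV]
    by_cases h : k' = k
    · subst h; simp
    · obtain ⟨ℓ, hℓ⟩ := Function.ne_iff.mp h
      rw [Finset.prod_eq_zero (Finset.mem_univ ℓ)] ; · rw [if_neg h]
      · simp [hℓ]
  simp_rw [this]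
  simp

lemma adjoint (X : (∀ ℓ, Fin (n ℓ)) → ℝ) (μ : (∀ ℓ, Fin (r ℓ)) → ℝ) :
    ∑ i, X i * Tmap V μ i = ∑ k, Pmap V X k * μ k := by
  unfold Tmap Pmap
  simp_rw [Finset.mul_sum, Finset.sum_mul]
  rw [Finset.sum_comm]
  apply Finset.sum_congr rfl; intro k _
  apply Finset.sum_congr rfl; intro i _
  ring

include hV in
lemma isometry (μ : (∀ ℓ, Fin (r ℓ)) → ℝ) :
    ∑ i, (Tmap V μ i) ^ 2 = ∑ k, (μ k) ^ 2 := by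
  have := adjoint V (Tmap V μ) μ
  rw [Pmap_Tmap V hV] at this
  simpa [sq] using this

include hV in
lemma bessel (X : (∀ ℓ, Fin (n ℓ)) → ℝ) :
    ∑ k, (Pmap V X k) ^ 2 ≤ ∑ i, (X i) ^ 2 := by
  have h0 : (0:ℝ) ≤ ∑ i, (X i - Tmap V (Pmap V X) i) ^ 2 :=
    Finset.sum_nonneg fun i _ => sq_nonneg _
  have hexp : ∑ i, (X i - Tmap V (Pmap V X) i) ^ 2
      = ∑ i, (X i)^2 - 2 * ∑ i, X i * Tmap V (Pmap V X) i
        + ∑ i, (Tmap V (Pmap V X) i)^2 := by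
    simp_rw [sub_sq]
    rw [Finset.sum_add_distrib, Finset.sum_sub_distrib, Finset.mul_sum]
    simp_rw [mul_assoc]
  rw [adjoint, isometry V hV] at hexp
  have hpp : ∑ k, Pmap V X k * Pmap V X k = ∑ k, (Pmap V X k)^2 := by simp [sq]
  rw [hpp] at hexp
  linarith [h0, hexp]

lemma hasCanRank_Tmap {R : ℕ} {μ : (∀ ℓ, Fin (r ℓ)) → ℝ} (h : HasCanRank R μ) :
    HasCanRank R (Tmap V μ) := by
  obtain ⟨lam, y, hy⟩ := h
  refine ⟨lam, fun ℓ ν i => ∑ j, V ℓ i j * y ℓ ν j, fun i => ?_⟩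
  unfold Tmap
  simp_rw [hy, Finset.sum_mul, mul_assoc]
  rw [Finset.sum_comm]
  apply Finset.sum_congr rfl; intro ν _
  rw [← Finset.mul_sum]
  congr 1
  have : ∀ k : (∀ ℓ, Fin (r ℓ)),
      (∏ ℓ, y ℓ ν (k ℓ)) * ∏ ℓ, V ℓ (i ℓ) (k ℓ)
      = ∏ ℓ, (V ℓ (i ℓ) (k ℓ) * y ℓ ν (k ℓ)) := by
    intro k; rw [← Finset.prod_mul_distrib]; exact Finset.prod_congr rfl fun ℓ _ => mul_comm _ _
  simp_rw [this]
  exact sum_prod_eq (fun ℓ j => V ℓ (i ℓ) j * y ℓ ν j)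

lemma hasCanRank_Pmap {R : ℕ} {Z : (∀ ℓ, Fin (n ℓ)) → ℝ} (h : HasCanRank R Z) :
    HasCanRank R (Pmap V Z) := by
  obtain ⟨lam, y, hy⟩ := h
  refine ⟨lam, fun ℓ ν j => ∑ i, y ℓ ν i * V ℓ i j, fun k => ?_⟩
  unfold Pmap
  simp_rw [hy, Finset.sum_mul, mul_assoc]
  rw [Finset.sum_comm]
  apply Finset.sum_congr rfl; intro ν _
  rw [← Finset.mul_sum]
  congr 1
  have : ∀ i : (∀ ℓ, Fin (n ℓ)),
      (∏ ℓ, y ℓ ν (i ℓ)) * ∏ ℓ, V ℓ (i ℓ) (k ℓ)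
      = ∏ ℓ, (y ℓ ν (i ℓ) * V ℓ (i ℓ) (k ℓ)) := by
    intro i; rw [← Finset.prod_mul_distrib]
  simp_rw [this]
  exact sum_prod_eq (fun ℓ j => y ℓ ν j * V ℓ j (k ℓ))

end Aux

/-- **Mixed Tucker-to-canonical approximation, part (A)** (Lemma 2.4 (A),
Khoromskaia–Khoromskij). For a Tucker tensor `A = β ×₁ V^{(1)} ⋯ ×_d V^{(d)}` with
orthonormal side matrices, the best rank-`R` canonical approximation error of `A`
equals the best rank-`R` canonical approximation error of its core `β`. -/
theorem tucker_to_canonical_inf_eq (d : ℕ) (n r : Fin d → ℕ)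
    (β : (∀ ℓ, Fin (r ℓ)) → ℝ)
    (V : ∀ ℓ, Fin (n ℓ) → Fin (r ℓ) → ℝ)
    (hV : ∀ ℓ k k', ∑ i, V ℓ i k * V ℓ i k' = if k = k' then (1:ℝ) else 0)
    (A : (∀ ℓ, Fin (n ℓ)) → ℝ)
    (hA : ∀ i, A i = ∑ k : (∀ ℓ, Fin (r ℓ)), β k * ∏ ℓ, V ℓ (i ℓ) (k ℓ))
    (R : ℕ) (hR : 1 ≤ R) :
    sInf {e : ℝ | ∃ Z : (∀ ℓ, Fin (n ℓ)) → ℝ,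
        HasCanRank R Z ∧ e = frob (fun i => A i - Z i)} =
    sInf {e : ℝ | ∃ μ : (∀ ℓ, Fin (r ℓ)) → ℝ,
        HasCanRank R μ ∧ e = frob (fun k => β k - μ k)} := by
  have hAT : A = Tmap V β := by funext i; exact hA i
  have zeroRankN : HasCanRank R (fun _ : (∀ ℓ, Fin (n ℓ)) => (0:ℝ)) :=
    ⟨fun _ => 0, fun _ _ _ => 0, fun i => by simp⟩
  have zeroRankR : HasCanRank R (fun _ : (∀ ℓ, Fin (r ℓ)) => (0:ℝ)) :=
    ⟨fun _ => 0, fun _ _ _ => 0, fun i => by simp⟩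
  set L := {e : ℝ | ∃ Z : (∀ ℓ, Fin (n ℓ)) → ℝ,
      HasCanRank R Z ∧ e = frob (fun i => A i - Z i)} with hL
  set Rset := {e : ℝ | ∃ μ : (∀ ℓ, Fin (r ℓ)) → ℝ,
      HasCanRank R μ ∧ e = frob (fun k => β k - μ k)} with hRs
  have hLne : L.Nonempty := ⟨_, ⟨_, zeroRankN, rfl⟩⟩
  have hRne : Rset.Nonempty := ⟨_, ⟨_, zeroRankR, rfl⟩⟩
  have hLbdd : BddBelow L := ⟨0, fun e ⟨Z, _, he⟩ => he ▸ Real.sqrt_nonneg _⟩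
  have hRbdd : BddBelow Rset := ⟨0, fun e ⟨μ, _, he⟩ => he ▸ Real.sqrt_nonneg _⟩
  apply le_antisymm
  · -- sInf L ≤ sInf Rset : given μ, take Z = Tmap V μ with equal error
    apply le_csInf hRne
    rintro e ⟨μ, hμ, rfl⟩
    have hmem : frob (fun i => A i - Tmap V μ i) ∈ L := ⟨Tmap V μ, hasCanRank_Tmap V hμ, rfl⟩
    have heq : frob (fun i => A i - Tmap V μ i) = frob (fun k => β k - μ k) := by
      unfold frob
      congr 1
      have hdiff : (fun i => A i - Tmap V μ i) = Tmap V (fun k => β k - μ k) := by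
        funext i
        rw [hAT]
        unfold Tmap
        rw [← Finset.sum_sub_distrib]
        exact Finset.sum_congr rfl fun k _ => by ring
      rw [hdiff]
      exact isometry V hV _
    calc sInf L ≤ frob (fun i => A i - Tmap V μ i) := csInf_le hLbdd hmem
      _ = _ := heq
  · -- sInf Rset ≤ sInf L : given Z, take μ = Pmap V Z with error ≤
    apply le_csInf hLne
    rintro e ⟨Z, hZ, rfl⟩
    have hmem : frob (fun k => β k - Pmap V Z k) ∈ Rset :=
      ⟨Pmap V Z, hasCanRank_Pmap V hZ, rfl⟩
    have hle : frob (fun k => β k - Pmap V Z k) ≤ frob (fun i => A i - Z i) := by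
      unfold frob
      apply Real.sqrt_le_sqrt
      have hPA : Pmap V A = β := by rw [hAT]; exact Pmap_Tmap V hV β
      have hdiff : (fun k => β k - Pmap V Z k) = Pmap V (fun i => A i - Z i) := by
        funext k
        rw [← hPA]
        unfold Pmap
        rw [← Finset.sum_sub_distrib]
        exact Finset.sum_congr rfl fun i _ => by ring
      rw [hdiff]
      exact bessel V hV _
    calc sInf Rset ≤ frob (fun k => β k - Pmap V Z k) := csInf_le hRbdd hmem
      _ ≤ _ := hle
end
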